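/- Fix Δt, ε > 0, a planar vector E_⊥, a scalar b > 0, and consider the backward Euler step v^{n+1} = v^n + Δt(E_⊥ - b (v^{n+1})^⊥/ε) for planar vectors. If the sequence (v^n) is bounded by M, then ‖v^{n+1}‖ ≤ ε·(2M/(b·Δt) + ‖E_⊥‖/b). In particular, for fixed Δt, v^{n+1} = O(ε) as ε → 0. -/

import Mathlib

/-!
Solving the implicit step for the Lorentz term gives
`(b/ε) (v^{n+1})^⊥ = E_⊥ - (v^{n+1} - v^n)/Δt`. The rotation `⊥` preserves the norm of planar
vectors, so `(b/ε) ‖v^{n+1}‖ ≤ ‖E_⊥‖ + 2M/Δt`, and multiplying by `ε/b` gives the bound.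
-/

/-- The 90-degree rotation in the x-y plane: `w^⊥ = (-w₂, w₁, 0)`. -/
noncomputable def perp (v : EuclideanSpace ℝ (Fin 3)) : EuclideanSpace ℝ (Fin 3) :=
  WithLp.toLp 2 (fun i : Fin 3 => if i = 0 then -(v 1) else if i = 1 then v 0 else 0)

lemma norm_perp {v : EuclideanSpace ℝ (Fin 3)} (hv : v 2 = 0) : ‖perp v‖ = ‖v‖ := by
  rw [EuclideanSpace.norm_eq, EuclideanSpace.norm_eq, Fin.sum_univ_three, Fin.sum_univ_three]
  simp [perp, hv, add_comm]

lemma norm_le_of_implicit_step {V : Type*} [NormedAddCommGroup V] [NormedSpace ℝ V]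
    {u w E p : V} {h c : ℝ} (hh : 0 < h) (hc : 0 < c) (hstep : u = w + h • (E - c • p)) :
    ‖p‖ ≤ (‖E‖ + (‖u‖ + ‖w‖) / h) / c := by
  have hsolve : c • p = E - h⁻¹ • (u - w) := by
    rw [hstep, add_sub_cancel_left, smul_smul, inv_mul_cancel₀ hh.ne', one_smul, sub_sub_cancel]
  rw [le_div_iff₀ hc, mul_comm, ← abs_of_pos hc, ← Real.norm_eq_abs, ← norm_smul, hsolve]
  calc ‖E - h⁻¹ • (u - w)‖ ≤ ‖E‖ + ‖u - w‖ / h := by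
        simpa [norm_smul, abs_of_pos hh, inv_mul_eq_div] using norm_sub_le E (h⁻¹ • (u - w))
    _ ≤ ‖E‖ + (‖u‖ + ‖w‖) / h := by gcongr; exact norm_sub_le u w

theorem backward_euler_velocity_order_eps_general (Δt ε b M : ℝ)
    (hΔt : 0 < Δt) (hε : 0 < ε) (hb : 0 < b)
    (E : EuclideanSpace ℝ (Fin 3))
    (v : ℕ → EuclideanSpace ℝ (Fin 3)) (hplanar : ∀ n, v n 2 = 0)
    (hrec : ∀ n, v (n + 1) = v n + Δt • (E - (b / ε) • perp (v (n + 1))))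
    (hbound : ∀ n, ‖v n‖ ≤ M) :
    ∀ n, ‖v (n + 1)‖ ≤ ε * (2 * M / (b * Δt) + ‖E‖ / b) := by
  intro n
  calc ‖v (n + 1)‖ = ‖perp (v (n + 1))‖ := (norm_perp (hplanar (n + 1))).symm
    _ ≤ (‖E‖ + (‖v (n + 1)‖ + ‖v n‖) / Δt) / (b / ε) :=
        norm_le_of_implicit_step hΔt (div_pos hb hε) (hrec n)
    _ ≤ (‖E‖ + (M + M) / Δt) / (b / ε) := by gcongr <;> exact hbound _
    _ = ε * (2 * M / (b * Δt) + ‖E‖ / b) := by field_simp; ring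

theorem backward_euler_velocity_order_eps (Δt ε b M : ℝ)
    (hΔt : 0 < Δt) (hε : 0 < ε) (hb : 0 < b) (hM : 0 ≤ M)
    (E : EuclideanSpace ℝ (Fin 3)) (hE : E 2 = 0)
    (v : ℕ → EuclideanSpace ℝ (Fin 3)) (hplanar : ∀ n, v n 2 = 0)
    (hrec : ∀ n, v (n + 1) = v n + Δt • (E - (b / ε) • perp (v (n + 1))))
    (hbound : ∀ n, ‖v n‖ ≤ M) :
    ∀ n, ‖v (n + 1)‖ ≤ ε * (2 * M / (b * Δt) + ‖E‖ / b) :=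
  backward_euler_velocity_order_eps_general Δt ε b M hΔt hε hb E v hplanar hrec hbound
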